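/- Let F be a spreading linear triple system on a finite set V with |V| = n > 5. If T, T' ∈ F are adjacent triples, then Val(T) + Val(T') ≤ n. -/

import Mathlib

open Finset

variable {α : Type*}

/-- A pair of (distinct) vertices is covered if it lies in some triple of `F`. -/
def Covered [DecidableEq α] (F : Finset (Finset α)) (x y : α) : Prop :=
  ∃ T ∈ F, x ∈ T ∧ y ∈ T

instance [DecidableEq α] (F : Finset (Finset α)) (x y : α) : Decidable (Covered F x y) :=
  inferInstanceAs (Decidable (∃ T ∈ F, x ∈ T ∧ y ∈ T))

/-- Linear triple system on `V`. -/
def IsLinearTS [DecidableEq α] (V : Finset α) (F : Finset (Finset α)) : Prop :=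
  (∀ T ∈ F, T ⊆ V ∧ T.card = 3) ∧
    ∀ x ∈ V, ∀ y ∈ V, x ≠ y → (F.filter fun T => x ∈ T ∧ y ∈ T).card ≤ 1

/-- Steiner triple system on `V`. -/
def IsSTS [DecidableEq α] (V : Finset α) (F : Finset (Finset α)) : Prop :=
  (∀ T ∈ F, T ⊆ V ∧ T.card = 3) ∧
    ∀ x ∈ V, ∀ y ∈ V, x ≠ y → (F.filter fun T => x ∈ T ∧ y ∈ T).card = 1

/-- Neighbourhood of `V'` with respect to the triple system `F` on `V`. -/
def nbhd [DecidableEq α] (V : Finset α) (F : Finset (Finset α)) (V' : Finset α) : Finset α :=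
  (V \ V').filter fun z => ∃ x ∈ V', ∃ y ∈ V', x ≠ y ∧ ({x, y, z} : Finset α) ∈ F

/-- `F` is spreading: the closure of every nontrivial subset is `V`. -/
def IsSpreading [DecidableEq α] (V : Finset α) (F : Finset (Finset α)) : Prop :=
  ∀ V' ⊆ V, 3 ≤ V'.card → V' ∉ F →
    ∀ W, V' ⊆ W → W ⊆ V → nbhd V F W = ∅ → W = V

/-- `F` is weakly spreading. -/
def IsWeaklySpreading [DecidableEq α] (V : Finset α) (F : Finset (Finset α)) : Prop :=
  ∀ F' ⊆ F, 2 ≤ F'.card →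
    ∀ W, F'.biUnion id ⊆ W → W ⊆ V → nbhd V F W = ∅ → W = V

/-- `Val(T)`: number of private neighbours of the triple `T`. -/
def valT [DecidableEq α] (V : Finset α) (F : Finset (Finset α)) (T : Finset α) : ℕ :=
  ((V \ T).filter fun v => (T.filter fun t => Covered F v t).card = 1).card

/-- Two triples are adjacent if pairs of each span a `C₄` in the complement of the skeleton. -/
def AdjT [DecidableEq α] (F : Finset (Finset α)) (T T' : Finset α) : Prop :=
  ∃ v₁ ∈ T, ∃ v₂ ∈ T, ∃ u₁ ∈ T', ∃ u₂ ∈ T',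
    v₁ ≠ v₂ ∧ u₁ ≠ u₂ ∧ v₁ ≠ u₁ ∧ v₁ ≠ u₂ ∧ v₂ ≠ u₁ ∧ v₂ ≠ u₂ ∧
    ¬Covered F v₁ u₁ ∧ ¬Covered F u₁ v₂ ∧ ¬Covered F v₂ u₂ ∧ ¬Covered F u₂ v₁

instance [DecidableEq α] (F : Finset (Finset α)) (T T' : Finset α) : Decidable (AdjT F T T') :=
  inferInstanceAs (Decidable (∃ v₁ ∈ T, ∃ v₂ ∈ T, ∃ u₁ ∈ T', ∃ u₂ ∈ T',
    v₁ ≠ v₂ ∧ u₁ ≠ u₂ ∧ v₁ ≠ u₁ ∧ v₁ ≠ u₂ ∧ v₂ ≠ u₁ ∧ v₂ ≠ u₂ ∧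
    ¬Covered F v₁ u₁ ∧ ¬Covered F u₁ v₂ ∧ ¬Covered F v₂ u₂ ∧ ¬Covered F u₂ v₁))

/-!
A private neighbour `w` of `T` is covered with at most one vertex of `T`, so it misses one of
the two vertices `v₁, v₂` of `T` on the uncovered 4-cycle; likewise it misses some `u ∈ T'`.
If `w` were a private neighbour of both triples, `w, v, u` would be pairwise uncovered. Such a
set spans no triple and has empty neighbourhood, i.e. it is closed, which a spreading system on
more than three vertices forbids. Hence the private neighbours of `T` and `T'` are disjoint
subsets of `V`.
-/

variable [DecidableEq α] {V : Finset α} {F : Finset (Finset α)}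

theorem Covered.symm {x y : α} (h : Covered F x y) : Covered F y x := by
  obtain ⟨T, hT, hx, hy⟩ := h
  exact ⟨T, hT, hy, hx⟩

theorem nbhd_eq_empty_of_pairwise_not_covered {S : Finset α}
    (hS : (S : Set α).Pairwise fun x y => ¬Covered F x y) : nbhd V F S = ∅ := by
  refine eq_empty_iff_forall_notMem.2 fun z hz => ?_
  obtain ⟨-, x, hx, y, hy, hxy, hxyz⟩ := mem_filter.1 hz
  exact hS hx hy hxy ⟨_, hxyz, by simp, by simp⟩

theorem notMem_of_pairwise_not_covered {S : Finset α} (hcard : 2 ≤ S.card)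
    (hS : (S : Set α).Pairwise fun x y => ¬Covered F x y) : S ∉ F := by
  intro hSF
  obtain ⟨x, y, hx, hy, hxy⟩ := one_lt_card_iff.1 hcard
  exact hS hx hy hxy ⟨S, hSF, hx, hy⟩

/-- A pairwise uncovered 3-set is closed and not a triple, so spreading forces it to be `V`. -/
theorem IsSpreading.card_le_two_of_pairwise_not_covered (hF : IsSpreading V F)
    (hV : 3 < V.card) {S : Finset α} (hSV : S ⊆ V)
    (hS : (S : Set α).Pairwise fun x y => ¬Covered F x y) : S.card ≤ 2 := by
  by_contra! hcard
  obtain ⟨R, hRS, hR⟩ := exists_subset_card_eq (show 3 ≤ S.card by omega)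
  have hRpair : (R : Set α).Pairwise fun x y => ¬Covered F x y := hS.mono (by simpa)
  have hRV : R = V := hF R (hRS.trans hSV) hR.ge
    (notMem_of_pairwise_not_covered (by omega) hRpair) R subset_rfl (hRS.trans hSV)
    (nbhd_eq_empty_of_pairwise_not_covered hRpair)
  rw [hRV] at hR
  omega

def privateNeighbours (V : Finset α) (F : Finset (Finset α)) (T : Finset α) : Finset α :=
  (V \ T).filter fun v => (T.filter fun t => Covered F v t).card = 1

theorem valT_eq_card_privateNeighbours (T : Finset α) :
    valT V F T = (privateNeighbours V F T).card := rfl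

theorem privateNeighbours_subset_sdiff (T : Finset α) : privateNeighbours V F T ⊆ V \ T :=
  filter_subset _ _

theorem not_covered_or_not_covered_of_mem_privateNeighbours {T : Finset α} {w a b : α}
    (hw : w ∈ privateNeighbours V F T) (ha : a ∈ T) (hb : b ∈ T) (hab : a ≠ b) :
    ¬Covered F w a ∨ ¬Covered F w b := by
  by_contra! h
  exact hab <| card_le_one.1 (mem_filter.1 hw).2.le a (mem_filter.2 ⟨ha, h.1⟩)
    b (mem_filter.2 ⟨hb, h.2⟩)

theorem disjoint_privateNeighbours_of_adjT (hF : IsSpreading V F) (hV : 3 < V.card)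
    {T T' : Finset α} (hTV : T ⊆ V) (hT'V : T' ⊆ V) (hAdj : AdjT F T T') :
    Disjoint (privateNeighbours V F T) (privateNeighbours V F T') := by
  obtain ⟨v₁, hv₁, v₂, hv₂, u₁, hu₁, u₂, hu₂, hv, hu, h11, h12, h21, h22,
    c11, c12, c22, c21⟩ := hAdj
  refine disjoint_left.2 fun w hwT hwT' => ?_
  obtain ⟨hwV, hw_notMem_T⟩ := mem_sdiff.1 (privateNeighbours_subset_sdiff T hwT)
  have hw_notMem_T' := (mem_sdiff.1 (privateNeighbours_subset_sdiff T' hwT')).2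
  obtain ⟨v, hvT, hwv, hvu₁, hvu₂, hvu₁', hvu₂'⟩ : ∃ v ∈ T, ¬Covered F w v ∧
      ¬Covered F v u₁ ∧ ¬Covered F v u₂ ∧ v ≠ u₁ ∧ v ≠ u₂ := by
    rcases not_covered_or_not_covered_of_mem_privateNeighbours hwT hv₁ hv₂ hv with h | h
    · exact ⟨v₁, hv₁, h, c11, fun h' => c21 h'.symm, h11, h12⟩
    · exact ⟨v₂, hv₂, h, fun h' => c12 h'.symm, c22, h21, h22⟩
  obtain ⟨u, huT', hwu, hvu, hvu'⟩ : ∃ u ∈ T', ¬Covered F w u ∧ ¬Covered F v u ∧ v ≠ u := by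
    rcases not_covered_or_not_covered_of_mem_privateNeighbours hwT' hu₁ hu₂ hu with h | h
    · exact ⟨u₁, hu₁, h, hvu₁, hvu₁'⟩
    · exact ⟨u₂, hu₂, h, hvu₂, hvu₂'⟩
  have hwv' : w ≠ v := fun h => hw_notMem_T (h ▸ hvT)
  have hwu' : w ≠ u := fun h => hw_notMem_T' (h ▸ huT')
  have : Std.Symm fun x y => ¬Covered F x y := ⟨fun _ _ h h' => h h'.symm⟩
  have hcard := hF.card_le_two_of_pairwise_not_covered hV (S := {w, v, u})
    (by simp [insert_subset_iff, hwV, hTV hvT, hT'V huT'])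
    (by simp [Set.pairwise_insert_of_symm, hwv, hwu, hvu])
  rw [card_insert_of_notMem (by simp [hwv', hwu']), card_pair hvu'] at hcard
  omega

/-- If `T, T'` are adjacent triples of a spreading linear triple system
on `n > 5` vertices, then `Val(T) + Val(T') ≤ n`. -/
theorem statement_10 {α : Type*} [DecidableEq α] (V : Finset α) (F : Finset (Finset α))
    (n : ℕ) (hn : V.card = n) (hL : IsLinearTS V F) (hS : IsSpreading V F) (hV : 5 < n)
    (T T' : Finset α) (hT : T ∈ F) (hT' : T' ∈ F) (hAdj : AdjT F T T') :
    valT V F T + valT V F T' ≤ n := by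
  have hdisj := disjoint_privateNeighbours_of_adjT hS (by omega) (hL.1 T hT).1
    (hL.1 T' hT').1 hAdj
  calc valT V F T + valT V F T'
      = (privateNeighbours V F T ∪ privateNeighbours V F T').card := by
        rw [card_union_of_disjoint hdisj, valT_eq_card_privateNeighbours,
          valT_eq_card_privateNeighbours]
    _ ≤ V.card := card_le_card <| union_subset
        ((privateNeighbours_subset_sdiff T).trans sdiff_subset)
        ((privateNeighbours_subset_sdiff T').trans sdiff_subset)
    _ = n := hn
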